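/- arXiv:2411.10324 — 6 statements merged into one kernel-verified Lean document; each statement's English description precedes it below -/
import Mathlib

section
/- The characteristic polynomial of M = BCBABA is λ^3 − (λ^2/64)(r^6 − 10r^5 + 23r^4 − 44r^3 + 15r^2 − 74r + 25) + (λ/64)(25r^6 − 74r^5 + 15r^4 − 44r^3 + 23r^2 − 10r + 1) − r^6. -/
open Polynomial in
lemma my_charpoly_fin_three (M : Matrix (Fin 3) (Fin 3) ℝ) :
    M.charpoly = X^3 - C (M 0 0 + M 1 1 + M 2 2) * X^2
      + C (M 0 0 * M 1 1 - M 0 1 * M 1 0 + M 0 0 * M 2 2 - M 0 2 * M 2 0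
           + M 1 1 * M 2 2 - M 1 2 * M 2 1) * X
      - C (M 0 0 * (M 1 1 * M 2 2 - M 1 2 * M 2 1)
           - M 0 1 * (M 1 0 * M 2 2 - M 1 2 * M 2 0)
           + M 0 2 * (M 1 0 * M 2 1 - M 1 1 * M 2 0)) := by
  rw [Matrix.charpoly, Matrix.det_fin_three]
  rw [Matrix.charmatrix_apply_eq, Matrix.charmatrix_apply_eq, Matrix.charmatrix_apply_eq,
    Matrix.charmatrix_apply_ne _ _ _ (by decide), Matrix.charmatrix_apply_ne _ _ _ (by decide),
    Matrix.charmatrix_apply_ne _ _ _ (by decide), Matrix.charmatrix_apply_ne _ _ _ (by decide),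
    Matrix.charmatrix_apply_ne _ _ _ (by decide), Matrix.charmatrix_apply_ne _ _ _ (by decide)]
  simp only [map_add, map_sub, map_mul]
  ring

set_option maxHeartbeats 1000000 in
theorem stmt_4 (r : ℝ) (hr : 0 < r) (hr1 : r < 1)
    (A B C : Matrix (Fin 3) (Fin 3) ℝ)
    (hA : A = !![-r, 0, 0; (1+r)/2, 1, 0; 0, 0, 1])
    (hB : B = !![1, (1+r)/2, 0; 0, -r, 0; 0, (1+r)/2, 1])
    (hC : C = !![1, 0, 0; 0, 1, (1+r)/2; 0, 0, -r]) :
    (B * C * B * A * B * A).charpoly =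
      Polynomial.X ^ 3
      - Polynomial.C ((r^6 - 10*r^5 + 23*r^4 - 44*r^3 + 15*r^2 - 74*r + 25) / 64)
          * Polynomial.X ^ 2
      + Polynomial.C ((25*r^6 - 74*r^5 + 15*r^4 - 44*r^3 + 23*r^2 - 10*r + 1) / 64)
          * Polynomial.X
      - Polynomial.C (r ^ 6) := by
  have h1 : B * C = !![(1:ℝ), (1/2:ℝ) + (1/2:ℝ)*r, (1/4:ℝ) + (1/2:ℝ)*r + (1/4:ℝ)*r^2;
        (0:ℝ), (-1:ℝ)*r, (-1/2:ℝ)*r + (-1/2:ℝ)*r^2;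
        (0:ℝ), (1/2:ℝ) + (1/2:ℝ)*r, (1/4:ℝ) + (-1/2:ℝ)*r + (1/4:ℝ)*r^2] := by
    rw [hB, hC]
    ext i j
    fin_cases i <;> fin_cases j <;> simp [Matrix.mul_apply, Fin.sum_univ_three, Matrix.vecHead, Matrix.vecTail] <;> ring
  have h2 : B * C * B = !![(1:ℝ), (5/8:ℝ) + (3/8:ℝ)*r + (-1/8:ℝ)*r^2 + (1/8:ℝ)*r^3, (1/4:ℝ) + (1/2:ℝ)*r + (1/4:ℝ)*r^2;
        (0:ℝ), (-1/4:ℝ)*r + (1/2:ℝ)*r^2 + (-1/4:ℝ)*r^3, (-1/2:ℝ)*r + (-1/2:ℝ)*r^2;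
        (0:ℝ), (1/8:ℝ) + (-5/8:ℝ)*r + (-5/8:ℝ)*r^2 + (1/8:ℝ)*r^3, (1/4:ℝ) + (-1/2:ℝ)*r + (1/4:ℝ)*r^2] := by
    rw [h1, hB]
    ext i j
    fin_cases i <;> fin_cases j <;> simp [Matrix.mul_apply, Fin.sum_univ_three, Matrix.vecHead, Matrix.vecTail] <;> ring
  have h3 : B * C * B * A = !![(5/16:ℝ) + (-1/2:ℝ)*r + (1/8:ℝ)*r^2 + (1/16:ℝ)*r^4, (5/8:ℝ) + (3/8:ℝ)*r + (-1/8:ℝ)*r^2 + (1/8:ℝ)*r^3, (1/4:ℝ) + (1/2:ℝ)*r + (1/4:ℝ)*r^2;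
        (-1/8:ℝ)*r + (1/8:ℝ)*r^2 + (1/8:ℝ)*r^3 + (-1/8:ℝ)*r^4, (-1/4:ℝ)*r + (1/2:ℝ)*r^2 + (-1/4:ℝ)*r^3, (-1/2:ℝ)*r + (-1/2:ℝ)*r^2;
        (1/16:ℝ) + (-1/4:ℝ)*r + (-5/8:ℝ)*r^2 + (-1/4:ℝ)*r^3 + (1/16:ℝ)*r^4, (1/8:ℝ) + (-5/8:ℝ)*r + (-5/8:ℝ)*r^2 + (1/8:ℝ)*r^3, (1/4:ℝ) + (-1/2:ℝ)*r + (1/4:ℝ)*r^2] := by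
    rw [h2, hA]
    ext i j
    fin_cases i <;> fin_cases j <;> simp [Matrix.mul_apply, Fin.sum_univ_three, Matrix.vecHead, Matrix.vecTail] <;> ring
  have h4 : B * C * B * A * B = !![(5/16:ℝ) + (-1/2:ℝ)*r + (1/8:ℝ)*r^2 + (1/16:ℝ)*r^4, (9/32:ℝ) + (-11/32:ℝ)*r + (-3/16:ℝ)*r^2 + (5/16:ℝ)*r^3 + (-3/32:ℝ)*r^4 + (1/32:ℝ)*r^5, (1/4:ℝ) + (1/2:ℝ)*r + (1/4:ℝ)*r^2;
        (-1/8:ℝ)*r + (1/8:ℝ)*r^2 + (1/8:ℝ)*r^3 + (-1/8:ℝ)*r^4, (-5/16:ℝ)*r + (-1/4:ℝ)*r^2 + (-5/8:ℝ)*r^3 + (1/4:ℝ)*r^4 + (-1/16:ℝ)*r^5, (-1/2:ℝ)*r + (-1/2:ℝ)*r^2;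
        (1/16:ℝ) + (-1/4:ℝ)*r + (-5/8:ℝ)*r^2 + (-1/4:ℝ)*r^3 + (1/16:ℝ)*r^4, (5/32:ℝ) + (-11/32:ℝ)*r + (1/16:ℝ)*r^2 + (5/16:ℝ)*r^3 + (-7/32:ℝ)*r^4 + (1/32:ℝ)*r^5, (1/4:ℝ) + (-1/2:ℝ)*r + (1/4:ℝ)*r^2] := by
    rw [h3, hB]
    ext i j
    fin_cases i <;> fin_cases j <;> simp [Matrix.mul_apply, Fin.sum_univ_three, Matrix.vecHead, Matrix.vecTail] <;> ring
  have h5 : B * C * B * A * B * A = !![(9/64:ℝ) + (-11/32:ℝ)*r + (15/64:ℝ)*r^2 + (-1/16:ℝ)*r^3 + (7/64:ℝ)*r^4 + (-3/32:ℝ)*r^5 + (1/64:ℝ)*r^6, (9/32:ℝ) + (-11/32:ℝ)*r + (-3/16:ℝ)*r^2 + (5/16:ℝ)*r^3 + (-3/32:ℝ)*r^4 + (1/32:ℝ)*r^5, (1/4:ℝ) + (1/2:ℝ)*r + (1/4:ℝ)*r^2;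
        (-5/32:ℝ)*r + (-5/32:ℝ)*r^2 + (-9/16:ℝ)*r^3 + (-5/16:ℝ)*r^4 + (7/32:ℝ)*r^5 + (-1/32:ℝ)*r^6, (-5/16:ℝ)*r + (-1/4:ℝ)*r^2 + (-5/8:ℝ)*r^3 + (1/4:ℝ)*r^4 + (-1/16:ℝ)*r^5, (-1/2:ℝ)*r + (-1/2:ℝ)*r^2;
        (5/64:ℝ) + (-5/32:ℝ)*r + (7/64:ℝ)*r^2 + (13/16:ℝ)*r^3 + (19/64:ℝ)*r^4 + (-5/32:ℝ)*r^5 + (1/64:ℝ)*r^6, (5/32:ℝ) + (-11/32:ℝ)*r + (1/16:ℝ)*r^2 + (5/16:ℝ)*r^3 + (-7/32:ℝ)*r^4 + (1/32:ℝ)*r^5, (1/4:ℝ) + (-1/2:ℝ)*r + (1/4:ℝ)*r^2] := by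
    rw [h4, hA]
    ext i j
    fin_cases i <;> fin_cases j <;> simp [Matrix.mul_apply, Fin.sum_univ_three, Matrix.vecHead, Matrix.vecTail] <;> ring
  have key : ∀ (t s d t' s' d' : ℝ), t = t' → s = s' → d = d' →
      (Polynomial.X ^ 3 - Polynomial.C t * Polynomial.X ^ 2 + Polynomial.C s * Polynomial.X
        - Polynomial.C d : Polynomial ℝ)
      = Polynomial.X ^ 3 - Polynomial.C t' * Polynomial.X ^ 2 + Polynomial.C s' * Polynomial.X
        - Polynomial.C d' := by
    rintro t s d t' s' d' rfl rfl rfl; rfl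
  rw [h5, my_charpoly_fin_three]
  simp only [Matrix.cons_val', Matrix.cons_val_zero, Matrix.cons_val_one, Matrix.head_cons,
    Matrix.empty_val', Matrix.cons_val_fin_one, Matrix.head_fin_const, Matrix.cons_val_two,
    Matrix.tail_cons, Matrix.of_apply]
  exact key _ _ _ _ _ _ (by ring) (by ring) (by ring)
end

section
/- The polynomial P_3(r) = r^5 − 15r^4 + 66r^3 − 86r^2 − 35r + 5 has exactly one root in the open interval (0,1), and that root is strictly greater than 5 − 2√6. -/
theorem stmt_6 :
    ∃ x : ℝ, x ∈ Set.Ioo (0 : ℝ) 1 ∧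
      x ^ 5 - 15 * x ^ 4 + 66 * x ^ 3 - 86 * x ^ 2 - 35 * x + 5 = 0 ∧
      (∀ y ∈ Set.Ioo (0 : ℝ) 1,
        y ^ 5 - 15 * y ^ 4 + 66 * y ^ 3 - 86 * y ^ 2 - 35 * y + 5 = 0 → y = x) ∧
      5 - 2 * Real.sqrt 6 < x := by
  set s := Real.sqrt 6 with hs
  have hs0 : 0 ≤ s := Real.sqrt_nonneg 6
  have hs2 : s ^ 2 = 6 := Real.sq_sqrt (by norm_num)
  have hslt : s < 2.45 := by nlinarith [sq_nonneg (s - 2.45)]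
  have hsgt : 2.4 < s := by nlinarith [sq_nonneg (s - 2.4)]
  set f : ℝ → ℝ := fun x => x ^ 5 - 15 * x ^ 4 + 66 * x ^ 3 - 86 * x ^ 2 - 35 * x + 5 with hf
  set a : ℝ := 5 - 2 * s with ha
  have ha0 : 0 < a := by simp only [ha]; nlinarith
  have ha1 : a < 1 := by simp only [ha]; nlinarith
  have hfa : 0 < f a := by
    have : f a = 3136 - 1280 * s := by
      simp only [hf, ha]
      linear_combination (576 - 320 * s + 160 * s ^ 2 - 32 * s ^ 3) * hs2
    rw [this]; nlinarith
  have hf1 : f 1 < 0 := by norm_num [hf]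
  have hcont : ContinuousOn f (Set.Icc a 1) := by
    apply Continuous.continuousOn; simp only [hf]; continuity
  have hmem : (0 : ℝ) ∈ Set.Ioo (f 1) (f a) := ⟨hf1, hfa⟩
  obtain ⟨x, hx, hfx⟩ := intermediate_value_Ioo' (le_of_lt ha1) hcont hmem
  refine ⟨x, ⟨lt_trans ha0 hx.1, hx.2⟩, hfx, ?_, hx.1⟩
  intro y hy hfy
  -- uniqueness: f strictly decreasing on (0,1)
  have hx01 : x ∈ Set.Ioo (0:ℝ) 1 := ⟨lt_trans ha0 hx.1, hx.2⟩
  have hkey : (y - x) * (y^4 + y^3*x + y^2*x^2 + y*x^3 + x^4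
      - 15*(y^3 + y^2*x + y*x^2 + x^3) + 66*(y^2 + y*x + x^2) - 86*(y + x) - 35) = 0 := by
    have hfy' : f y = 0 := by simpa [hf] using hfy
    have h1 : f y - f x = 0 := by rw [hfy', hfx]; ring
    simp only [hf] at h1
    nlinarith [h1]
  have hQ : (y^4 + y^3*x + y^2*x^2 + y*x^3 + x^4
      - 15*(y^3 + y^2*x + y*x^2 + x^3) + 66*(y^2 + y*x + x^2) - 86*(y + x) - 35) < 0 := by
    obtain ⟨hy0, hy1⟩ := hy
    obtain ⟨hx0, hx1⟩ := hx01
    nlinarith [mul_pos hy0 hx0, sq_nonneg (y - x), sq_nonneg (y + x),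
      mul_nonneg (mul_nonneg hy0.le hx0.le) (sub_nonneg.2 hy1.le),
      mul_nonneg (mul_nonneg hy0.le hx0.le) (sub_nonneg.2 hx1.le),
      mul_pos (mul_pos hy0 hy0) hx0, mul_pos hy0 (mul_pos hx0 hx0),
      mul_nonneg hy0.le (sub_nonneg.2 hy1.le), mul_nonneg hx0.le (sub_nonneg.2 hx1.le),
      mul_nonneg (mul_nonneg hy0.le hy0.le) (sub_nonneg.2 hy1.le),
      mul_nonneg (mul_nonneg hx0.le hx0.le) (sub_nonneg.2 hx1.le),
      mul_nonneg (mul_nonneg (mul_nonneg hy0.le hy0.le) hy0.le) (sub_nonneg.2 hy1.le),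
      mul_nonneg (mul_nonneg (mul_nonneg hx0.le hx0.le) hx0.le) (sub_nonneg.2 hx1.le)]
  have := mul_eq_zero.mp hkey
  rcases this with h | h
  · linarith [sub_eq_zero.mp h]
  · exact absurd h (ne_of_lt hQ)
end

section
/- For all θ ∈ (0, π/2), φ ∈ (0, π), and r ∈ (0,1), the vector B·e_r is orthogonal to the cross product [p(1)] × [B q(0)], where e_r = (0, cos θ, sin θ), q(0) = (sin φ, −cos φ sin θ, cos φ cos θ), p(1) = (sin φ cos θ, 0, cos φ), and B = [[1,(1+r)/2,0],[0,−r,0],[0,(1+r)/2,1]]. -/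
open Matrix

theorem stmt_12 (r θ φ : ℝ) (hr : r ∈ Set.Ioo (0 : ℝ) 1)
    (hθ : θ ∈ Set.Ioo 0 (Real.pi / 2)) (hφ : φ ∈ Set.Ioo 0 Real.pi) :
    ((!![1, (1+r)/2, 0; 0, -r, 0; 0, (1+r)/2, 1] : Matrix (Fin 3) (Fin 3) ℝ) *ᵥ
        ![0, Real.cos θ, Real.sin θ]) ⬝ᵥ
      (crossProduct ![Real.sin φ * Real.cos θ, 0, Real.cos φ]
        ((!![1, (1+r)/2, 0; 0, -r, 0; 0, (1+r)/2, 1] : Matrix (Fin 3) (Fin 3) ℝ) *ᵥ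
          ![Real.sin φ, -Real.cos φ * Real.sin θ, Real.cos φ * Real.cos θ])) = 0 := by
  simp [crossProduct, dotProduct, mulVec, Fin.sum_univ_three]
  linear_combination (r * Real.cos θ * Real.cos φ * Real.sin φ) * Real.sin_sq_add_cos_sq θ
end

section
/- For all θ ∈ (0, π/2), φ ∈ (π/2, π), and r ∈ (0,1), the vector C·e_r is orthogonal to the cross product [p(1)] × [C q(0)], where e_r = (0, cos θ, sin θ), q(0) = (sin φ, −cos φ sin θ, cos φ cos θ), p(1) = (−sin φ sin θ, cos φ, 0), and C = [[1,0,0],[0,1,(1+r)/2],[0,0,−r]]. -/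
open Matrix

theorem stmt_13 (r θ φ : ℝ) (hr : r ∈ Set.Ioo (0 : ℝ) 1)
    (hθ : θ ∈ Set.Ioo 0 (Real.pi / 2)) (hφ : φ ∈ Set.Ioo (Real.pi / 2) Real.pi) :
    ((!![1, 0, 0; 0, 1, (1+r)/2; 0, 0, -r] : Matrix (Fin 3) (Fin 3) ℝ) *ᵥ
        ![0, Real.cos θ, Real.sin θ]) ⬝ᵥ
      (crossProduct ![-Real.sin φ * Real.sin θ, Real.cos φ, 0]
        ((!![1, 0, 0; 0, 1, (1+r)/2; 0, 0, -r] : Matrix (Fin 3) (Fin 3) ℝ) *ᵥ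
          ![Real.sin φ, -Real.cos φ * Real.sin θ, Real.cos φ * Real.cos θ])) = 0 := by
  have hs := Real.sin_sq_add_cos_sq θ
  simp [crossProduct, mulVec, dotProduct, Fin.sum_univ_succ, Matrix.cons_val_zero,
    Matrix.cons_val_one]
  linear_combination (-r * Real.sin θ * Real.sin φ * Real.cos φ) * hs
end

section
/- For all θ ∈ (0, π/2), φ ∈ (0, π), and r ∈ (0,1), the vector C·e_r is orthogonal to the cross product [p(1)] × [C q(0)], where e_r = (sin θ, 0, cos θ), q(0) = (cos φ cos θ, sin φ, −cos φ sin θ), p(1) = (cos φ, sin φ cos θ, 0), and C = [[1,0,0],[0,1,(1+r)/2],[0,0,−r]]. -/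
open Matrix

theorem stmt_14 (r θ φ : ℝ) (hr : r ∈ Set.Ioo (0 : ℝ) 1)
    (hθ : θ ∈ Set.Ioo 0 (Real.pi / 2)) (hφ : φ ∈ Set.Ioo 0 Real.pi) :
    ((!![1, 0, 0; 0, 1, (1+r)/2; 0, 0, -r] : Matrix (Fin 3) (Fin 3) ℝ) *ᵥ
        ![Real.sin θ, 0, Real.cos θ]) ⬝ᵥ
      (crossProduct ![Real.cos φ, Real.sin φ * Real.cos θ, 0]
        ((!![1, 0, 0; 0, 1, (1+r)/2; 0, 0, -r] : Matrix (Fin 3) (Fin 3) ℝ) *ᵥ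
          ![Real.cos φ * Real.cos θ, Real.sin φ, -Real.cos φ * Real.sin θ])) = 0 := by
  have hs := Real.sin_sq_add_cos_sq θ
  simp [crossProduct, mulVec, dotProduct, Fin.sum_univ_three, Matrix.cons_val_zero,
    Matrix.cons_val_one, Matrix.head_cons, Matrix.vecHead, Matrix.vecTail]
  linear_combination (Real.sin φ * Real.cos θ * Real.cos φ * r) * hs
end

section
/- The discriminant factor polynomial P_0(r) = 41r^{10} − 646r^9 + 3733r^8 − 14600r^7 + 42306r^6 − 78052r^5 + 42306r^4 − 14600r^3 + 3733r^2 − 646r + 41 has exactly one root in the open interval (0,1), and this root lies in the interval (0.113, 0.114). -/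
def Pfun : ℝ → ℝ := fun x =>
  41 * x ^ 10 - 646 * x ^ 9 + 3733 * x ^ 8 - 14600 * x ^ 7 + 42306 * x ^ 6
    - 78052 * x ^ 5 + 42306 * x ^ 4 - 14600 * x ^ 3 + 3733 * x ^ 2
    - 646 * x + 41

lemma deriv_neg_aux (x : ℝ) (hx0 : 0 < x) (hx1' : x < 1) :
    410*x^9 - 5814*x^8 + 29864*x^7 - 102200*x^6 + 253836*x^5 - 390260*x^4
      + 169224*x^3 - 43800*x^2 + 7466*x - 646 < 0 := by
  have hx1 : (0:ℝ) < 1 - x := by linarith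
  have hid : 410*x^9 - 5814*x^8 + 29864*x^7 - 102200*x^6 + 253836*x^5 - 390260*x^4
      + 169224*x^3 - 43800*x^2 + 7466*x - 646 = -(646 * (x^0 * (1-x)^30) + 11914 * (x^1 * (1-x)^29) + 108296 * (x^2 * (1-x)^28) + 648740 * (x^3 * (1-x)^27) + 2800478 * (x^4 * (1-x)^26) + 8718010 * (x^5 * (1-x)^25) + 19369420 * (x^6 * (1-x)^24) + 44358416 * (x^7 * (1-x)^23) + 246054892 * (x^8 * (1-x)^22) + 1625922196 * (x^9 * (1-x)^21) + 7893738240 * (x^10 * (1-x)^20) + 28424432280 * (x^11 * (1-x)^19) + 79707478284 * (x^12 * (1-x)^18) + 180209014468 * (x^13 * (1-x)^17) + 336065507624 * (x^14 * (1-x)^16) + 524788203440 * (x^15 * (1-x)^15) + 693063351310 * (x^16 * (1-x)^14) + 778976626466 * (x^17 * (1-x)^13) + 747742142552 * (x^18 * (1-x)^12) + 613677051876 * (x^19 * (1-x)^11) + 430153050390 * (x^20 * (1-x)^10) + 256669453890 * (x^21 * (1-x)^9) + 129629742764 * (x^22 * (1-x)^8) + 54935697568 * (x^23 * (1-x)^7)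 + 19294081024 * (x^24 * (1-x)^6) + 5517418496 * (x^25 * (1-x)^5) + 1252271104 * (x^26 * (1-x)^4) + 217075712 * (x^27 * (1-x)^3) + 27000832 * (x^28 * (1-x)^2) + 2146304 * (x^29 * (1-x)^1) + 81920 * (x^30 * (1-x)^0)) := by ring
  have t0 : (0:ℝ) < 646 * (x^0 * (1-x)^30) := mul_pos (by norm_num) (mul_pos (pow_pos hx0 0) (pow_pos hx1 30))
  have t1 : (0:ℝ) < 11914 * (x^1 * (1-x)^29) := mul_pos (by norm_num) (mul_pos (pow_pos hx0 1) (pow_pos hx1 29))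
  have t2 : (0:ℝ) < 108296 * (x^2 * (1-x)^28) := mul_pos (by norm_num) (mul_pos (pow_pos hx0 2) (pow_pos hx1 28))
  have t3 : (0:ℝ) < 648740 * (x^3 * (1-x)^27) := mul_pos (by norm_num) (mul_pos (pow_pos hx0 3) (pow_pos hx1 27))
  have t4 : (0:ℝ) < 2800478 * (x^4 * (1-x)^26) := mul_pos (by norm_num) (mul_pos (pow_pos hx0 4) (pow_pos hx1 26))
  have t5 : (0:ℝ) < 8718010 * (x^5 * (1-x)^25) := mul_pos (by norm_num) (mul_pos (pow_pos hx0 5) (pow_pos hx1 25))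
  have t6 : (0:ℝ) < 19369420 * (x^6 * (1-x)^24) := mul_pos (by norm_num) (mul_pos (pow_pos hx0 6) (pow_pos hx1 24))
  have t7 : (0:ℝ) < 44358416 * (x^7 * (1-x)^23) := mul_pos (by norm_num) (mul_pos (pow_pos hx0 7) (pow_pos hx1 23))
  have t8 : (0:ℝ) < 246054892 * (x^8 * (1-x)^22) := mul_pos (by norm_num) (mul_pos (pow_pos hx0 8) (pow_pos hx1 22))
  have t9 : (0:ℝ) < 1625922196 * (x^9 * (1-x)^21) := mul_pos (by norm_num) (mul_pos (pow_pos hx0 9) (pow_pos hx1 21))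
  have t10 : (0:ℝ) < 7893738240 * (x^10 * (1-x)^20) := mul_pos (by norm_num) (mul_pos (pow_pos hx0 10) (pow_pos hx1 20))
  have t11 : (0:ℝ) < 28424432280 * (x^11 * (1-x)^19) := mul_pos (by norm_num) (mul_pos (pow_pos hx0 11) (pow_pos hx1 19))
  have t12 : (0:ℝ) < 79707478284 * (x^12 * (1-x)^18) := mul_pos (by norm_num) (mul_pos (pow_pos hx0 12) (pow_pos hx1 18))
  have t13 : (0:ℝ) < 180209014468 * (x^13 * (1-x)^17) := mul_pos (by norm_num) (mul_pos (pow_pos hx0 13) (pow_pos hx1 17))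
  have t14 : (0:ℝ) < 336065507624 * (x^14 * (1-x)^16) := mul_pos (by norm_num) (mul_pos (pow_pos hx0 14) (pow_pos hx1 16))
  have t15 : (0:ℝ) < 524788203440 * (x^15 * (1-x)^15) := mul_pos (by norm_num) (mul_pos (pow_pos hx0 15) (pow_pos hx1 15))
  have t16 : (0:ℝ) < 693063351310 * (x^16 * (1-x)^14) := mul_pos (by norm_num) (mul_pos (pow_pos hx0 16) (pow_pos hx1 14))
  have t17 : (0:ℝ) < 778976626466 * (x^17 * (1-x)^13) := mul_pos (by norm_num) (mul_pos (pow_pos hx0 17) (pow_pos hx1 13))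
  have t18 : (0:ℝ) < 747742142552 * (x^18 * (1-x)^12) := mul_pos (by norm_num) (mul_pos (pow_pos hx0 18) (pow_pos hx1 12))
  have t19 : (0:ℝ) < 613677051876 * (x^19 * (1-x)^11) := mul_pos (by norm_num) (mul_pos (pow_pos hx0 19) (pow_pos hx1 11))
  have t20 : (0:ℝ) < 430153050390 * (x^20 * (1-x)^10) := mul_pos (by norm_num) (mul_pos (pow_pos hx0 20) (pow_pos hx1 10))
  have t21 : (0:ℝ) < 256669453890 * (x^21 * (1-x)^9) := mul_pos (by norm_num) (mul_pos (pow_pos hx0 21) (pow_pos hx1 9))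
  have t22 : (0:ℝ) < 129629742764 * (x^22 * (1-x)^8) := mul_pos (by norm_num) (mul_pos (pow_pos hx0 22) (pow_pos hx1 8))
  have t23 : (0:ℝ) < 54935697568 * (x^23 * (1-x)^7) := mul_pos (by norm_num) (mul_pos (pow_pos hx0 23) (pow_pos hx1 7))
  have t24 : (0:ℝ) < 19294081024 * (x^24 * (1-x)^6) := mul_pos (by norm_num) (mul_pos (pow_pos hx0 24) (pow_pos hx1 6))
  have t25 : (0:ℝ) < 5517418496 * (x^25 * (1-x)^5) := mul_pos (by norm_num) (mul_pos (pow_pos hx0 25) (pow_pos hx1 5))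
  have t26 : (0:ℝ) < 1252271104 * (x^26 * (1-x)^4) := mul_pos (by norm_num) (mul_pos (pow_pos hx0 26) (pow_pos hx1 4))
  have t27 : (0:ℝ) < 217075712 * (x^27 * (1-x)^3) := mul_pos (by norm_num) (mul_pos (pow_pos hx0 27) (pow_pos hx1 3))
  have t28 : (0:ℝ) < 27000832 * (x^28 * (1-x)^2) := mul_pos (by norm_num) (mul_pos (pow_pos hx0 28) (pow_pos hx1 2))
  have t29 : (0:ℝ) < 2146304 * (x^29 * (1-x)^1) := mul_pos (by norm_num) (mul_pos (pow_pos hx0 29) (pow_pos hx1 1))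
  have t30 : (0:ℝ) < 81920 * (x^30 * (1-x)^0) := mul_pos (by norm_num) (mul_pos (pow_pos hx0 30) (pow_pos hx1 0))
  linarith

lemma Pfun_hasDerivAt (x : ℝ) :
    HasDerivAt Pfun (410*x^9 - 5814*x^8 + 29864*x^7 - 102200*x^6 + 253836*x^5
      - 390260*x^4 + 169224*x^3 - 43800*x^2 + 7466*x - 646) x := by
  have H :=
    (((((((((((hasDerivAt_pow 10 x).const_mul (41:ℝ)).sub
      ((hasDerivAt_pow 9 x).const_mul (646:ℝ))).add
      ((hasDerivAt_pow 8 x).const_mul (3733:ℝ))).sub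
      ((hasDerivAt_pow 7 x).const_mul (14600:ℝ))).add
      ((hasDerivAt_pow 6 x).const_mul (42306:ℝ))).sub
      ((hasDerivAt_pow 5 x).const_mul (78052:ℝ))).add
      ((hasDerivAt_pow 4 x).const_mul (42306:ℝ))).sub
      ((hasDerivAt_pow 3 x).const_mul (14600:ℝ))).add
      ((hasDerivAt_pow 2 x).const_mul (3733:ℝ))).sub
      ((hasDerivAt_id x).const_mul (646:ℝ))).add_const (41:ℝ)
  have e : 41 * (((10:ℕ):ℝ) * x ^ (10-1)) - 646 * (((9:ℕ):ℝ) * x ^ (9-1)) + 3733 * (((8:ℕ):ℝ) * x ^ (8-1))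
      - 14600 * (((7:ℕ):ℝ) * x ^ (7-1)) + 42306 * (((6:ℕ):ℝ) * x ^ (6-1)) - 78052 * (((5:ℕ):ℝ) * x ^ (5-1))
      + 42306 * (((4:ℕ):ℝ) * x ^ (4-1)) - 14600 * (((3:ℕ):ℝ) * x ^ (3-1)) + 3733 * (((2:ℕ):ℝ) * x ^ (2-1))
      - 646 * 1
      = 410*x^9 - 5814*x^8 + 29864*x^7 - 102200*x^6 + 253836*x^5
      - 390260*x^4 + 169224*x^3 - 43800*x^2 + 7466*x - 646 := by
    push_cast; ring
  rw [e] at H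
  exact H

lemma Pfun_continuous : Continuous Pfun := by
  unfold Pfun; fun_prop

lemma Pfun_anti : StrictAntiOn Pfun (Set.Icc 0 1) := by
  apply strictAntiOn_of_deriv_neg (convex_Icc 0 1) Pfun_continuous.continuousOn
  intro x hx
  rw [interior_Icc] at hx
  rw [(Pfun_hasDerivAt x).deriv]
  exact deriv_neg_aux x hx.1 hx.2

theorem stmt_16 :
    ∃ x : ℝ, x ∈ Set.Ioo (0 : ℝ) 1 ∧
      41 * x ^ 10 - 646 * x ^ 9 + 3733 * x ^ 8 - 14600 * x ^ 7 + 42306 * x ^ 6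
        - 78052 * x ^ 5 + 42306 * x ^ 4 - 14600 * x ^ 3 + 3733 * x ^ 2
        - 646 * x + 41 = 0 ∧
      (∀ y ∈ Set.Ioo (0 : ℝ) 1,
        41 * y ^ 10 - 646 * y ^ 9 + 3733 * y ^ 8 - 14600 * y ^ 7 + 42306 * y ^ 6
          - 78052 * y ^ 5 + 42306 * y ^ 4 - 14600 * y ^ 3 + 3733 * y ^ 2
          - 646 * y + 41 = 0 → y = x) ∧
      x ∈ Set.Ioo (0.113 : ℝ) 0.114 := by
  have hab : (0.113 : ℝ) ≤ 0.114 := by norm_num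
  have hsub := intermediate_value_Ioo' hab Pfun_continuous.continuousOn
  have hmem : (0:ℝ) ∈ Set.Ioo (Pfun 0.114) (Pfun 0.113) := by
    constructor
    · show Pfun 0.114 < 0
      unfold Pfun; norm_num
    · show (0:ℝ) < Pfun 0.113
      unfold Pfun; norm_num
  obtain ⟨x, hx, hfx⟩ := hsub hmem
  have hx01 : x ∈ Set.Ioo (0:ℝ) 1 := ⟨by linarith [hx.1], by linarith [hx.2]⟩
  refine ⟨x, hx01, hfx, ?_, hx⟩
  intro y hy hPy
  have h1 : Pfun y = Pfun x := by
    show Pfun y = Pfun x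
    rw [hfx]
    exact hPy
  exact Pfun_anti.injOn (Set.Ioo_subset_Icc_self hy) (Set.Ioo_subset_Icc_self hx01) h1
end
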